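/- Fix a finite simplicial complex X on vertex set V, a field K, and an integer d ≥ 0. For integers k, m ≥ 0, say X satisfies condition P(k,m) if H̃_i(lk(X[A],B); K) = 0 for all i ≥ d and all B ⊆ A ⊆ V with |A| ≥ |V| − k and |B| ≤ m. Then for all k ≥ 0 and m ≥ 1, X satisfies P(k,m) if and only if X satisfies P(k+1, m−1). -/

import Mathlib

open Finset

/-- A finite abstract simplicial complex on the vertex type `V` (possibly void;
any non-void complex contains the empty face `∅` by downward closure). -/
structure SComplex (V : Type) [DecidableEq V] where
  faces : Finset (Finset V)
  down_closed : ∀ ⦃σ : Finset V⦄, σ ∈ faces → ∀ ⦃τ : Finset V⦄, τ ⊆ σ → τ ∈ faces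

namespace SComplex

variable {V : Type} [DecidableEq V]

/-- Intersection of two simplicial complexes on the same vertex set. -/
def inter (X Y : SComplex V) : SComplex V where
  faces := X.faces ∩ Y.faces
  down_closed := fun σ hσ τ hτ => by
    rw [Finset.mem_inter] at hσ ⊢
    exact ⟨X.down_closed hσ.1 hτ, Y.down_closed hσ.2 hτ⟩

/-- Union of two simplicial complexes on the same vertex set. -/
def union (X Y : SComplex V) : SComplex V where
  faces := X.faces ∪ Y.faces
  down_closed := fun σ hσ τ hτ => by
    rw [Finset.mem_union] at hσ ⊢
    exact hσ.elim (fun h => Or.inl (X.down_closed h hτ)) (fun h => Or.inr (Y.down_closed h hτ))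

/-- The induced subcomplex `X[S] = {σ ∈ X : σ ⊆ S}`. -/
def induced (X : SComplex V) (S : Finset V) : SComplex V where
  faces := X.faces.filter (fun σ => σ ⊆ S)
  down_closed := fun σ hσ τ hτ => by
    rw [Finset.mem_filter] at hσ ⊢
    exact ⟨X.down_closed hσ.1 hτ, hτ.trans hσ.2⟩

/-- The link `lk(X,A) = {τ ∈ X : τ ∩ A = ∅, τ ∪ A ∈ X}`; it is the void
complex when `A ∉ X`. -/
def link (X : SComplex V) (A : Finset V) : SComplex V where
  faces := X.faces.filter (fun τ => τ ∩ A = ∅ ∧ τ ∪ A ∈ X.faces)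
  down_closed := fun σ hσ τ hτ => by
    rw [Finset.mem_filter] at hσ ⊢
    refine ⟨X.down_closed hσ.1 hτ, Finset.subset_empty.1 ?_,
      X.down_closed hσ.2.2 (Finset.union_subset_union hτ (Finset.Subset.refl A))⟩
    rw [← hσ.2.1]
    exact Finset.inter_subset_inter hτ (Finset.Subset.refl A)

/-- The full simplex `Δ(A)` on a vertex set `A`. -/
def simplexOn (A : Finset V) : SComplex V where
  faces := A.powerset
  down_closed := fun σ hσ τ hτ =>
    Finset.mem_powerset.2 (hτ.trans (Finset.mem_powerset.1 hσ))

/-- The boundary `∂Δ(A)` of the simplex on `A` (all proper subsets of `A`). -/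
def bdSimplex (A : Finset V) : SComplex V where
  faces := A.powerset.erase A
  down_closed := fun σ hσ τ hτ => by
    rw [Finset.mem_erase, Finset.mem_powerset] at hσ ⊢
    refine ⟨fun hτA => hσ.1 ?_, hτ.trans hσ.2⟩
    subst hτA
    exact Finset.Subset.antisymm hσ.2 hτ

variable [Fintype V]

/-- Intersection of a finite family of complexes on the same vertex set. -/
def interFam {r : ℕ} (X : Fin r → SComplex V) : SComplex V where
  faces := Finset.univ.filter (fun σ => ∀ i, σ ∈ (X i).faces)
  down_closed := fun σ hσ τ hτ => by
    rw [Finset.mem_filter] at hσ ⊢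
    exact ⟨Finset.mem_univ τ, fun i => (X i).down_closed (hσ.2 i) hτ⟩

/-- Union of a finite family of complexes on the same vertex set. -/
def unionFam {r : ℕ} (X : Fin r → SComplex V) : SComplex V where
  faces := Finset.univ.filter (fun σ => ∃ i, σ ∈ (X i).faces)
  down_closed := fun σ hσ τ hτ => by
    rw [Finset.mem_filter] at hσ ⊢
    obtain ⟨-, i, hi⟩ := hσ
    exact ⟨Finset.mem_univ τ, i, (X i).down_closed hi hτ⟩

/-- The join of a family of complexes `Z i`, the `i`-th one having its vertices
inside the block `Vs i` of a partition of the vertex set: the faces are the sets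
whose trace on each block is a face of the corresponding complex. -/
def joinFam {r : ℕ} (Vs : Fin r → Finset V) (Z : Fin r → SComplex V) : SComplex V where
  faces := Finset.univ.filter (fun σ => ∀ i, σ ∩ Vs i ∈ (Z i).faces)
  down_closed := fun σ hσ τ hτ => by
    rw [Finset.mem_filter] at hσ ⊢
    exact ⟨Finset.mem_univ τ, fun i =>
      (Z i).down_closed (hσ.2 i) (Finset.inter_subset_inter hτ (Finset.Subset.refl _))⟩

/-- The Alexander dual `X* = {τ : [n] - τ ∉ X}`. -/
def dual (X : SComplex V) : SComplex V where
  faces := Finset.univ.filter (fun τ => τᶜ ∉ X.faces)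
  down_closed := fun σ hσ τ hτ => by
    rw [Finset.mem_filter] at hσ ⊢
    exact ⟨Finset.mem_univ τ, fun hc => hσ.2 (X.down_closed hc (Finset.compl_subset_compl.2 hτ))⟩

/-- The set of faces of `X` of cardinality `k` (i.e. of dimension `k - 1`). -/
def cells (X : SComplex V) (k : ℕ) : Finset (Finset V) :=
  X.faces.filter (fun σ => σ.card = k)

/-- The space of simplicial `(k-1)`-dimensional chains of `X` with coefficients
in `K`: chains are indexed by cardinality, so degree `k` chains are spanned by
the faces of cardinality `k`.  (In particular degree `0` chains are spanned by
the empty face, giving the augmented chain complex computing reduced homology.) -/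
abbrev Chains (K : Type) [Field K] (X : SComplex V) (k : ℕ) : Type := ↥(X.cells k) → K

/-- The simplicial boundary map from degree `k+1` chains (on faces of
cardinality `k+1`) to degree `k` chains.  Signs are computed with respect to a
fixed enumeration of the vertices. -/
noncomputable def boundary (K : Type) [Field K] (X : SComplex V) (k : ℕ) :
    Chains K X (k+1) →ₗ[K] Chains K X k :=
  LinearMap.pi fun τ =>
    ∑ σ : ↥(X.cells (k+1)),
      (∑ v ∈ (σ : Finset V),
        if (σ : Finset V).erase v = (τ : Finset V) then
          ((-1 : K) ^ (((σ : Finset V)).filter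
            (fun w => Fintype.equivFin V w < Fintype.equivFin V v)).card)
        else 0) • LinearMap.proj σ

/-- Cycles of the (augmented) simplicial chain complex in degree `k`
(corresponding to homological dimension `k - 1`). -/
noncomputable def cyclesSub (K : Type) [Field K] (X : SComplex V) :
    (k : ℕ) → Submodule K (Chains K X k)
  | 0 => ⊤
  | (m+1) => LinearMap.ker (boundary K X m)

/-- The reduced simplicial homology `H̃_{k-1}(X; K)` (cardinality-indexed: the
argument `k` corresponds to homological dimension `k - 1`). -/
noncomputable abbrev RedHomology (K : Type) [Field K] (X : SComplex V) (k : ℕ) : Type :=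
  ↥(cyclesSub K X k) ⧸ Submodule.comap (cyclesSub K X k).subtype
      (LinearMap.range (boundary K X k))

/-- `h̃_{k-1}(X) = dim_K H̃_{k-1}(X; K)` (cardinality-indexed, as in
`RedHomology`). -/
noncomputable def redHomDim (K : Type) [Field K] (X : SComplex V) (k : ℕ) : ℕ :=
  Module.finrank K (RedHomology K X k)

/-- `dim_K H̃_k(X; K)` for an arbitrary integer `k`; it is zero for `k ≤ -2`.
Here the argument is the genuine homological dimension `k`. -/
noncomputable def redHomDimZ (K : Type) [Field K] (X : SComplex V) (k : ℤ) : ℕ :=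
  if 0 ≤ k + 1 then redHomDim K X (k + 1).toNat else 0

/-- Chains supported on the faces of a subcomplex `A`, inside the chains of `X`. -/
noncomputable def subChains (K : Type) [Field K] (X A : SComplex V) (k : ℕ) :
    Submodule K (Chains K X k) :=
  ⨅ (σ : ↥(X.cells k)) (_ : (σ : Finset V) ∉ A.faces), LinearMap.ker (LinearMap.proj σ)

/-- Relative cycles in homological dimension `i` for the pair `(X, A)`. -/
noncomputable def relCycles (K : Type) [Field K] (X A : SComplex V) (i : ℕ) :
    Submodule K (Chains K X (i+1)) :=
  Submodule.comap (boundary K X i) (subChains K X A i)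

/-- The relative simplicial homology `H_i(X, A; K)` of the pair `(X, A)`. -/
noncomputable abbrev RelHomology (K : Type) [Field K] (X A : SComplex V) (i : ℕ) : Type :=
  ↥(relCycles K X A i) ⧸ Submodule.comap (relCycles K X A i).subtype
      (subChains K X A (i+1) ⊔ LinearMap.range (boundary K X (i+1)))

/-- `dim_K H_i(X, A; K)`. -/
noncomputable def relHomDim (K : Type) [Field K] (X A : SComplex V) (i : ℕ) : ℕ :=
  Module.finrank K (RelHomology K X A i)

/-- `X` is `d`-Leray over `K`: every induced subcomplex has vanishing reduced
homology in dimensions `≥ d`. -/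
def IsLeray (K : Type) [Field K] (d : ℕ) (X : SComplex V) : Prop :=
  ∀ S : Finset V, ∀ i : ℕ, d ≤ i → redHomDim K (X.induced S) (i + 1) = 0

/-- The Leray number `L_K(X)`: the minimal `d` such that `X` is `d`-Leray over `K`. -/
noncomputable def lerayNum (K : Type) [Field K] (X : SComplex V) : ℕ :=
  sInf {d | IsLeray K d X}

end SComplex

/-- Condition `P(k,m)` for a complex `X` on the vertex set `V` (with respect to
a fixed field `K` and a fixed integer `d ≥ 0`): `H̃_i(lk(X[A],B); K) = 0` for
all `i ≥ d` and all `B ⊆ A ⊆ V` with `|A| ≥ |V| - k` and `|B| ≤ m`.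
(Recall that `redHomDim K Z (i+1) = dim_K H̃_i(Z; K)`, cardinality-indexed.) -/
def CondP {V : Type} [DecidableEq V] [Fintype V] (K : Type) [Field K]
    (X : SComplex V) (d k m : ℕ) : Prop :=
  ∀ B A : Finset V, B ⊆ A → Fintype.card V - k ≤ A.card → B.card ≤ m →
    ∀ i : ℕ, d ≤ i → SComplex.redHomDim K ((X.induced A).link B) (i + 1) = 0

/-!
Write `Y - v` for `Y.induced (univ.erase v)`. The complex `Y` is the union of `Y - v` and the
cone `v * lk(Y, v)`, which meet in `lk(Y, v)`; since the cone is acyclic, Mayer–Vietoris gives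
`H̃_i(lk(Y, v)) → H̃_i(Y - v) → H̃_i(Y)` and `H̃_{i+1}(Y) → H̃_i(lk(Y, v)) → H̃_i(Y - v)` exact.
So vanishing of `H̃_i(Y)` and `H̃_i(lk(Y, v))` forces that of `H̃_i(Y - v)`, and vanishing of
`H̃_{i+1}(Y)` and `H̃_i(Y - v)` forces that of `H̃_i(lk(Y, v))`. For `Y = lk(X[A ∪ v], B)`,
resp. `Y = lk(X[A], B - v)`, both `Y - v` and `lk(Y, v)` are again links in induced subcomplexes,
and the two implications trade a vertex of `B` for a vertex outside `A` and back.

Rather than through the exact sequences, both implications are proved by chasing chains with the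
cone `c ↦ v ∧ c` and the contraction `ι_v`, using `∂ ι_v = -ι_v ∂` and `∂ (v ∧ c) = c - v ∧ ∂c`.
-/

lemma Finset.sum_ite_erase_eq_sum_ite_insert {α M : Type*} [DecidableEq α] [Fintype α]
    [AddCommMonoid M] (σ τ : Finset α) (a : α → M) :
    (∑ u ∈ σ, if σ.erase u = τ then a u else 0) = ∑ u ∈ τᶜ, if σ = insert u τ then a u else 0 := by
  rw [← sum_filter, ← sum_filter]
  refine sum_congr (Finset.ext fun u => ?_) fun _ _ => rfl
  simp only [mem_filter, mem_compl]
  constructor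
  · rintro ⟨hu, rfl⟩
    exact ⟨notMem_erase u σ, (insert_erase hu).symm⟩
  · rintro ⟨hu, rfl⟩
    exact ⟨mem_insert_self u τ, erase_insert hu⟩

namespace SComplex

open Function

section Sign

variable {V : Type} [Fintype V] {K : Type} [Field K]

variable (K) in
noncomputable def vertexSign (s : Finset V) (u : V) : K :=
  (-1) ^ (s.filter fun w => Fintype.equivFin V w < Fintype.equivFin V u).card

lemma vertexSign_mul_self (s : Finset V) (u : V) : vertexSign K s u * vertexSign K s u = 1 := by
  simp [vertexSign, ← mul_pow]

variable [DecidableEq V]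

lemma vertexSign_insert_self (s : Finset V) (u : V) :
    vertexSign K (insert u s) u = vertexSign K s u := by
  simp [vertexSign, filter_insert]

lemma vertexSign_insert {s : Finset V} {w : V} (hw : w ∉ s) (u : V) :
    vertexSign K (insert w s) u =
      (if Fintype.equivFin V w < Fintype.equivFin V u then -1 else 1) * vertexSign K s u := by
  unfold vertexSign
  rw [filter_insert]
  split_ifs with h
  · rw [card_insert_of_notMem (fun hw' => hw (mem_of_mem_filter w hw')), pow_succ, mul_comm]
  · rw [one_mul]

lemma vertexSign_insert_insert_mul {u v : V} {t : Finset V} (huv : u ≠ v) (hu : u ∉ t)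
    (hv : v ∉ t) :
    vertexSign K (insert u (insert v t)) u * vertexSign K (insert u (insert v t)) v =
      -(vertexSign K (insert u t) u * vertexSign K (insert v t) v) := by
  have hu' : u ∉ insert v t := by simp [huv, hu]
  rw [vertexSign_insert_self, vertexSign_insert hv, vertexSign_insert hu', vertexSign_insert_self,
    vertexSign_insert_self]
  rcases lt_trichotomy (Fintype.equivFin V u) (Fintype.equivFin V v) with h | h | h
  · simp [h, h.not_gt]
  · exact absurd ((Fintype.equivFin V).injective h) huv
  · simp [h, h.not_gt]

lemma vertexSign_mul_vertexSign_insert_insert {u v : V} {t : Finset V} (huv : u ≠ v)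
    (hu : u ∉ t) (hv : v ∉ t) :
    vertexSign K (insert u t) u * vertexSign K (insert u (insert v t)) v =
      -(vertexSign K (insert v t) v * vertexSign K (insert u (insert v t)) u) := by
  have hu' : u ∉ insert v t := by simp [huv, hu]
  rw [vertexSign_insert_self, vertexSign_insert_self, vertexSign_insert hu', vertexSign_insert_self,
    vertexSign_insert_self, vertexSign_insert hv]
  rcases lt_trichotomy (Fintype.equivFin V u) (Fintype.equivFin V v) with h | h | h
  · simp [h, h.not_gt]; ring
  · exact absurd ((Fintype.equivFin V).injective h) huv
  · simp [h, h.not_gt]; ring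

end Sign

section ChainOperators

variable {V : Type} [DecidableEq V] [Fintype V] (K : Type) [Field K]

/- All complexes on `V` share the chain space `Finset V → K`; a chain of `X` of degree `k` is one
supported on `X.cells k`. Under `g ↦ ∑ g s • e_s` into the exterior algebra on `V`, `chainBoundary`
is the interior product with `∑ e_u`, `contractChain v` the one with `e_v`, and `coneChain v` is
`e_v ∧ ·`; this is where the identities below come from. -/
noncomputable def chainBoundary : (Finset V → K) →ₗ[K] (Finset V → K) where
  toFun g t := ∑ u ∈ tᶜ, vertexSign K (insert u t) u * g (insert u t)
  map_add' g h := by ext t; simp [mul_add, sum_add_distrib]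
  map_smul' c g := by ext t; simp [mul_sum, mul_left_comm]

noncomputable def contractChain (v : V) : (Finset V → K) →ₗ[K] (Finset V → K) where
  toFun g t := if v ∈ t then 0 else vertexSign K (insert v t) v * g (insert v t)
  map_add' g h := by ext t; split_ifs <;> simp [*, mul_add]
  map_smul' c g := by ext t; split_ifs <;> simp [*, mul_left_comm]

noncomputable def coneChain (v : V) : (Finset V → K) →ₗ[K] (Finset V → K) where
  toFun g s := if v ∈ s then vertexSign K s v * g (s.erase v) else 0
  map_add' g h := by ext t; split_ifs <;> simp [*, mul_add]
  map_smul' c g := by ext t; split_ifs <;> simp [*, mul_left_comm]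

variable {K}

lemma chainBoundary_apply (g : Finset V → K) (t : Finset V) :
    chainBoundary K g t = ∑ u ∈ tᶜ, vertexSign K (insert u t) u * g (insert u t) := rfl

lemma contractChain_apply (v : V) (g : Finset V → K) (t : Finset V) :
    contractChain K v g t = if v ∈ t then 0 else vertexSign K (insert v t) v * g (insert v t) := rfl

lemma coneChain_apply (v : V) (g : Finset V → K) (s : Finset V) :
    coneChain K v g s = if v ∈ s then vertexSign K s v * g (s.erase v) else 0 := rfl

lemma contractChain_coneChain (v : V) (g : Finset V → K) :
    contractChain K v (coneChain K v g) = fun s => if v ∈ s then 0 else g s := by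
  ext s
  by_cases hv : v ∈ s
  · simp [contractChain_apply, hv]
  · simp [contractChain_apply, coneChain_apply, hv, ← mul_assoc, vertexSign_mul_self]

lemma sub_coneChain_contractChain (v : V) (g : Finset V → K) :
    g - coneChain K v (contractChain K v g) = fun s => if v ∈ s then 0 else g s := by
  ext s
  by_cases hv : v ∈ s
  · simp [contractChain_apply, coneChain_apply, hv, ← mul_assoc, vertexSign_mul_self]
  · simp [coneChain_apply, hv]

lemma chainBoundary_contractChain (v : V) (g : Finset V → K) :
    chainBoundary K (contractChain K v g) = -contractChain K v (chainBoundary K g) := by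
  ext t
  by_cases hv : v ∈ t
  · simp [chainBoundary_apply, contractChain_apply, hv]
  have hv0 : contractChain K v g (insert v t) = 0 := by simp [contractChain_apply]
  rw [Pi.neg_apply, contractChain_apply, if_neg hv, chainBoundary_apply, chainBoundary_apply,
    compl_insert, mul_sum, ← sum_neg_distrib, ← sum_erase tᶜ (a := v)
      (f := fun u => vertexSign K (insert u t) u * contractChain K v g (insert u t))
      (by rw [hv0, mul_zero])]
  refine sum_congr rfl fun u hu => ?_
  obtain ⟨huv, hut⟩ : u ≠ v ∧ u ∉ t := by simpa using hu
  have hvu : v ∉ insert u t := by simp [huv.symm, hv]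
  rw [contractChain_apply, if_neg hvu, insert_comm v u]
  linear_combination g (insert u (insert v t)) *
    vertexSign_mul_vertexSign_insert_insert (K := K) huv hut hv

lemma chainBoundary_coneChain (v : V) (g : Finset V → K) :
    chainBoundary K (coneChain K v g) = g - coneChain K v (chainBoundary K g) := by
  ext t
  by_cases hv : v ∈ t
  · obtain ⟨τ, hvτ, rfl⟩ : ∃ τ, v ∉ τ ∧ t = insert v τ :=
      ⟨t.erase v, notMem_erase v t, (insert_erase hv).symm⟩
    rw [Pi.sub_apply, coneChain_apply, if_pos hv, erase_insert hvτ, chainBoundary_apply,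
      chainBoundary_apply, ← add_sum_erase τᶜ _ (mem_compl.2 hvτ), compl_insert, mul_add,
      ← mul_assoc, vertexSign_mul_self, one_mul, sub_add_cancel_left, mul_sum, ← sum_neg_distrib]
    refine sum_congr rfl fun u hu => ?_
    obtain ⟨huv, huτ⟩ : u ≠ v ∧ u ∉ τ := by simpa using hu
    rw [coneChain_apply, if_pos (by simp), erase_insert_of_ne huv, erase_insert hvτ]
    linear_combination g (insert u τ) * vertexSign_insert_insert_mul (K := K) huv huτ hvτ
  · rw [Pi.sub_apply, coneChain_apply, if_neg hv, sub_zero, chainBoundary_apply,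
      sum_eq_single v]
    · rw [coneChain_apply, if_pos (mem_insert_self v t), erase_insert hv, ← mul_assoc,
        vertexSign_mul_self, one_mul]
    · intro u _ huv
      rw [coneChain_apply, if_neg (by simp [Ne.symm huv, hv]), mul_zero]
    · simp [hv]

end ChainOperators

section Complexes

variable {V : Type} [DecidableEq V]

@[ext]
lemma ext {X Y : SComplex V} (h : X.faces = Y.faces) : X = Y := by
  cases X; cases Y; simpa using h

lemma mem_induced {X : SComplex V} {S τ : Finset V} :
    τ ∈ (X.induced S).faces ↔ τ ∈ X.faces ∧ τ ⊆ S := mem_filter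

lemma mem_link {X : SComplex V} {A τ : Finset V} :
    τ ∈ (X.link A).faces ↔ τ ∈ X.faces ∧ τ ∩ A = ∅ ∧ τ ∪ A ∈ X.faces := mem_filter

lemma mem_link_singleton {X : SComplex V} {v : V} {τ : Finset V} :
    τ ∈ (X.link {v}).faces ↔ v ∉ τ ∧ insert v τ ∈ X.faces := by
  rw [mem_link, ← disjoint_iff_inter_eq_empty, disjoint_singleton_right, union_comm,
    ← insert_eq]
  exact ⟨fun h => ⟨h.2.1, h.2.2⟩, fun h => ⟨X.down_closed h.2 (subset_insert v τ), h⟩⟩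

lemma link_link_singleton (X : SComplex V) {B : Finset V} {v : V} (hv : v ∉ B) :
    (X.link B).link {v} = X.link (insert v B) := by
  ext τ
  rw [mem_link_singleton, mem_link, mem_link]
  simp only [← disjoint_iff_inter_eq_empty, disjoint_insert_left, disjoint_insert_right,
    insert_union, union_insert]
  constructor
  · rintro ⟨hvτ, hX, ⟨-, hτB⟩, hXB⟩
    exact ⟨X.down_closed hX (subset_insert v τ), ⟨hvτ, hτB⟩, hXB⟩
  · rintro ⟨hX, ⟨hvτ, hτB⟩, hXB⟩
    exact ⟨hvτ, X.down_closed hXB (insert_subset_insert v subset_union_left), ⟨hv, hτB⟩, hXB⟩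

variable [Fintype V] in
lemma induced_erase_link (X : SComplex V) (A : Finset V) {B : Finset V} {v : V} (hv : v ∉ B) :
    ((X.induced A).link B).induced (univ.erase v) = (X.induced (A.erase v)).link B := by
  ext τ
  simp only [mem_induced, mem_link, subset_erase, mem_union, not_or, subset_univ, true_and]
  tauto

end Complexes

section Homology

variable {V : Type} [DecidableEq V] {K : Type} [Field K]

lemma mem_cells {X : SComplex V} {k : ℕ} {s : Finset V} :
    s ∈ X.cells k ↔ s ∈ X.faces ∧ s.card = k := mem_filter

variable (K) in
noncomputable def extendChain (X : SComplex V) (k : ℕ) : Chains K X k →ₗ[K] (Finset V → K) where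
  toFun c s := if h : s ∈ X.cells k then c ⟨s, h⟩ else 0
  map_add' c c' := by ext s; by_cases h : s ∈ X.cells k <;> simp [h]
  map_smul' a c := by ext s; by_cases h : s ∈ X.cells k <;> simp [h]

lemma extendChain_coe {X : SComplex V} {k : ℕ} (c : Chains K X k) (σ : X.cells k) :
    extendChain K X k c σ = c σ := dif_pos σ.2

lemma extendChain_injective (X : SComplex V) (k : ℕ) : Injective (extendChain K X k) :=
  fun c c' h => funext fun σ => by simpa only [extendChain_coe] using congrFun h σ

lemma support_extendChain_subset {X : SComplex V} {k : ℕ} (c : Chains K X k) :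
    support (extendChain K X k c) ⊆ X.cells k := by
  intro s hs
  by_contra h
  exact hs (dif_neg h)

lemma exists_extendChain_eq {X : SComplex V} {k : ℕ} {g : Finset V → K}
    (hg : support g ⊆ X.cells k) : ∃ c, extendChain K X k c = g := by
  refine ⟨fun σ => g σ, funext fun s => ?_⟩
  by_cases hs : s ∈ X.cells k
  · exact dif_pos hs
  · exact ((dif_neg hs).trans (notMem_support.1 fun h => hs (hg h)).symm)

variable [Fintype V]

lemma mem_cells_induced_erase {X : SComplex V} {v : V} {k : ℕ} {s : Finset V} :
    s ∈ (X.induced (univ.erase v)).cells k ↔ s ∈ X.cells k ∧ v ∉ s := by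
  simp only [mem_cells, mem_induced, subset_erase, subset_univ, true_and]
  tauto

lemma cells_link_singleton_subset (X : SComplex V) (v : V) (k : ℕ) :
    (X.link {v}).cells k ⊆ (X.induced (univ.erase v)).cells k := by
  intro s hs
  obtain ⟨hL, hcard⟩ := mem_cells.1 hs
  obtain ⟨hvs, hX⟩ := mem_link_singleton.1 hL
  exact mem_cells_induced_erase.2 ⟨mem_cells.2 ⟨X.down_closed hX (subset_insert v s), hcard⟩, hvs⟩

lemma cells_induced_erase_subset (X : SComplex V) (v : V) (k : ℕ) :
    (X.induced (univ.erase v)).cells k ⊆ X.cells k :=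
  fun _ hs => (mem_cells_induced_erase.1 hs).1

lemma support_chainBoundary_subset {X : SComplex V} {k : ℕ} {g : Finset V → K}
    (hg : support g ⊆ X.cells (k + 1)) : support (chainBoundary K g) ⊆ X.cells k := by
  intro t ht
  by_contra htk
  refine ht (sum_eq_zero fun u hu => ?_)
  suffices g (insert u t) = 0 by rw [this, mul_zero]
  by_contra hg'
  obtain ⟨hX, hcard⟩ := mem_cells.1 (hg hg')
  rw [card_insert_of_notMem (mem_compl.1 hu)] at hcard
  exact htk (mem_cells.2 ⟨X.down_closed hX (subset_insert u t), by omega⟩)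

lemma support_contractChain_subset {X : SComplex V} {v : V} {k : ℕ} {g : Finset V → K}
    (hg : support g ⊆ X.cells (k + 1)) : support (contractChain K v g) ⊆ (X.link {v}).cells k := by
  intro t ht
  rw [mem_support, contractChain_apply] at ht
  split_ifs at ht with hvt
  · exact absurd rfl ht
  obtain ⟨hX, hcard⟩ := mem_cells.1 (hg (right_ne_zero_of_mul ht))
  rw [card_insert_of_notMem hvt] at hcard
  exact mem_cells.2 ⟨mem_link_singleton.2 ⟨hvt, hX⟩, by omega⟩

lemma support_coneChain_subset {X : SComplex V} {v : V} {k : ℕ} {b : Finset V → K}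
    (hb : support b ⊆ (X.link {v}).cells k) : support (coneChain K v b) ⊆ X.cells (k + 1) := by
  intro s hs
  rw [mem_support, coneChain_apply] at hs
  split_ifs at hs with hvs
  · obtain ⟨hL, hcard⟩ := mem_cells.1 (hb (right_ne_zero_of_mul hs))
    rw [mem_link_singleton, insert_erase hvs] at hL
    exact mem_cells.2 ⟨hL.2, by rw [← card_erase_add_one hvs, hcard]⟩
  · exact absurd rfl hs

lemma contractChain_eq_zero {X : SComplex V} {v : V} {k : ℕ} {g : Finset V → K}
    (hg : support g ⊆ (X.induced (univ.erase v)).cells k) : contractChain K v g = 0 := by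
  ext t
  rw [contractChain_apply]
  split_ifs
  · rfl
  · rw [notMem_support.1 fun h => (mem_cells_induced_erase.1 (hg h)).2 (mem_insert_self v t),
      mul_zero, Pi.zero_apply]

variable (K) in
def CyclesAreBoundaries (X : SComplex V) (k : ℕ) : Prop :=
  ∀ g : Finset V → K, support g ⊆ X.cells (k + 1) → chainBoundary K g = 0 →
    ∃ f, support f ⊆ X.cells (k + 2) ∧ chainBoundary K f = g

lemma boundary_apply_eq (X : SComplex V) (k : ℕ) (c : Chains K X (k + 1)) (t : Finset V)
    (ht : t ∈ X.cells k) :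
    boundary K X k c ⟨t, ht⟩ = chainBoundary K (extendChain K X (k + 1) c) t := by
  set e := extendChain K X (k + 1) c
  calc boundary K X k c ⟨t, ht⟩
      = ∑ σ : X.cells (k + 1), (∑ u ∈ (σ : Finset V),
          if (σ : Finset V).erase u = t then vertexSign K σ u else 0) * e σ := by
        simp only [boundary, LinearMap.pi_apply, LinearMap.coe_sum, Finset.sum_apply,
          LinearMap.smul_apply, LinearMap.proj_apply, smul_eq_mul, e, extendChain_coe]
        rfl
    _ = ∑ σ, (∑ u ∈ tᶜ, if σ = insert u t then vertexSign K σ u else 0) * e σ := by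
        rw [sum_coe_sort (X.cells (k + 1)) fun σ =>
          (∑ u ∈ σ, if σ.erase u = t then vertexSign K σ u else 0) * e σ]
        refine (sum_subset (subset_univ _) fun σ _ hσ => ?_).trans
          (sum_congr rfl fun σ _ => by rw [sum_ite_erase_eq_sum_ite_insert])
        have he : e σ = 0 := notMem_support.1 fun h => hσ (support_extendChain_subset c h)
        rw [he, mul_zero]
    _ = ∑ u ∈ tᶜ, ∑ σ, if σ = insert u t then vertexSign K σ u * e σ else 0 := by
        simp only [sum_mul, ite_mul, zero_mul]
        exact sum_comm
    _ = chainBoundary K e t := by simp [chainBoundary_apply]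

lemma extendChain_boundary (X : SComplex V) (k : ℕ) (c : Chains K X (k + 1)) :
    extendChain K X k (boundary K X k c) = chainBoundary K (extendChain K X (k + 1) c) := by
  ext t
  by_cases ht : t ∈ X.cells k
  · exact (extendChain_coe _ ⟨t, ht⟩).trans (boundary_apply_eq X k c t ht)
  · rw [notMem_support.1 fun h => ht (support_extendChain_subset _ h),
      notMem_support.1 fun h => ht (support_chainBoundary_subset (support_extendChain_subset c) h)]

lemma redHomDim_eq_zero_iff (X : SComplex V) (k : ℕ) :
    redHomDim K X (k + 1) = 0 ↔ CyclesAreBoundaries K X k := by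
  have hker : redHomDim K X (k + 1) = 0 ↔
      LinearMap.ker (boundary K X k) ≤ LinearMap.range (boundary K X (k + 1)) := by
    rw [redHomDim, Module.finrank_zero_iff, Submodule.Quotient.subsingleton_iff,
      Submodule.comap_subtype_eq_top]
    rfl
  rw [hker]
  constructor
  · intro h g hg hbd
    obtain ⟨c, rfl⟩ := exists_extendChain_eq hg
    have hc : boundary K X k c = 0 :=
      extendChain_injective X k (by rw [extendChain_boundary, hbd, map_zero])
    obtain ⟨w, hw⟩ := h (LinearMap.mem_ker.2 hc)
    exact ⟨extendChain K X (k + 2) w, support_extendChain_subset w,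
      by rw [← extendChain_boundary, hw]⟩
  · intro h z hz
    obtain ⟨f, hf, hbd⟩ := h (extendChain K X (k + 1) z) (support_extendChain_subset z)
      (by rw [← extendChain_boundary, LinearMap.mem_ker.1 hz, map_zero])
    obtain ⟨w, rfl⟩ := exists_extendChain_eq hf
    exact ⟨w, extendChain_injective X (k + 1) (by rw [extendChain_boundary, hbd])⟩

lemma CyclesAreBoundaries.induced_erase {Y : SComplex V} {v : V} {q : ℕ}
    (hY : CyclesAreBoundaries K Y q) (hL : CyclesAreBoundaries K (Y.link {v}) q) :
    CyclesAreBoundaries K (Y.induced (univ.erase v)) q := by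
  intro a ha hda
  obtain ⟨f, hf, rfl⟩ := hY a (ha.trans (cells_induced_erase_subset Y v _)) hda
  have hb : support (contractChain K v f) ⊆ (Y.link {v}).cells (q + 1) :=
    support_contractChain_subset hf
  have hdb : chainBoundary K (contractChain K v f) = 0 := by
    rw [chainBoundary_contractChain, contractChain_eq_zero ha, neg_zero]
  obtain ⟨h, hh, hdh⟩ := hL _ hb hdb
  have hf₀ : support (f - coneChain K v (contractChain K v f)) ⊆
      (Y.induced (univ.erase v)).cells (q + 2) := by
    intro s hs
    rw [sub_coneChain_contractChain, mem_support] at hs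
    split_ifs at hs with hvs
    · exact absurd rfl hs
    · exact mem_cells_induced_erase.2 ⟨hf hs, hvs⟩
  refine ⟨f - coneChain K v (contractChain K v f) + h,
    (support_add _ _).trans (Set.union_subset hf₀ (hh.trans (cells_link_singleton_subset Y v _))),
    ?_⟩
  rw [map_add, map_sub, chainBoundary_coneChain, hdb, map_zero, sub_zero, hdh, sub_add_cancel]

lemma CyclesAreBoundaries.link_singleton {Y : SComplex V} {v : V} {q : ℕ}
    (hY : CyclesAreBoundaries K Y (q + 1))
    (hD : CyclesAreBoundaries K (Y.induced (univ.erase v)) q) :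
    CyclesAreBoundaries K (Y.link {v}) q := by
  intro b hb hdb
  obtain ⟨c, hc, hdc⟩ := hD b (hb.trans (cells_link_singleton_subset Y v _)) hdb
  have hz : support (coneChain K v b - c) ⊆ Y.cells (q + 2) :=
    (support_sub _ _).trans
      (Set.union_subset (support_coneChain_subset hb) (hc.trans (cells_induced_erase_subset Y v _)))
  have hdz : chainBoundary K (coneChain K v b - c) = 0 := by
    rw [map_sub, chainBoundary_coneChain, hdb, map_zero, sub_zero, hdc, sub_self]
  obtain ⟨F, hF, hdF⟩ := hY _ hz hdz
  refine ⟨-contractChain K v F, (support_neg _).trans_subset (support_contractChain_subset hF), ?_⟩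
  rw [map_neg, chainBoundary_contractChain, neg_neg, hdF, map_sub, contractChain_eq_zero hc,
    sub_zero, contractChain_coneChain]
  ext s
  split_ifs with hvs
  · exact (notMem_support.1 fun h => (mem_link_singleton.1 (mem_cells.1 (hb h)).1).1 hvs).symm
  · rfl

lemma redHomDim_induced_erase_eq_zero {Y : SComplex V} {v : V} {q : ℕ}
    (hY : redHomDim K Y (q + 1) = 0) (hL : redHomDim K (Y.link {v}) (q + 1) = 0) :
    redHomDim K (Y.induced (univ.erase v)) (q + 1) = 0 :=
  (redHomDim_eq_zero_iff _ q).2 <|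
    ((redHomDim_eq_zero_iff Y q).1 hY).induced_erase ((redHomDim_eq_zero_iff _ q).1 hL)

lemma redHomDim_link_singleton_eq_zero {Y : SComplex V} {v : V} {q : ℕ}
    (hY : redHomDim K Y (q + 2) = 0) (hD : redHomDim K (Y.induced (univ.erase v)) (q + 1) = 0) :
    redHomDim K (Y.link {v}) (q + 1) = 0 :=
  (redHomDim_eq_zero_iff _ q).2 <|
    ((redHomDim_eq_zero_iff Y (q + 1)).1 hY).link_singleton ((redHomDim_eq_zero_iff _ q).1 hD)

end Homology

end SComplex

section CondP

open SComplex

variable {V : Type} [DecidableEq V] [Fintype V] {K : Type} [Field K] {X : SComplex V} {d : ℕ}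

lemma CondP.mono {k k' m m' : ℕ} (h : CondP K X d k m) (hk : k' ≤ k) (hm : m' ≤ m) :
    CondP K X d k' m' :=
  fun B A hBA hA hB => h B A hBA ((Nat.sub_le_sub_left hk _).trans hA) (hB.trans hm)

lemma CondP.trade_link_for_deletion {k m : ℕ} (hP : CondP K X d k (m + 1)) :
    CondP K X d (k + 1) m := by
  intro B A hBA hA hB i hi
  by_cases hAk : Fintype.card V - k ≤ A.card
  · exact hP B A hBA hAk (hB.trans m.le_succ) i hi
  obtain ⟨v, -, hv⟩ := exists_mem_notMem_of_card_lt_card (s := A) (t := univ)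
    (by rw [card_univ]; omega)
  have hvB : v ∉ B := fun h => hv (hBA h)
  have hvA : Fintype.card V - k ≤ (insert v A).card := by
    rw [card_insert_of_notMem hv]; omega
  have hY := hP B (insert v A) (hBA.trans (subset_insert v A)) hvA (by omega) i hi
  have hL := hP (insert v B) (insert v A) (insert_subset_insert v hBA) hvA
    (by rw [card_insert_of_notMem hvB]; omega) i hi
  rw [← link_link_singleton _ hvB] at hL
  have := redHomDim_induced_erase_eq_zero hY hL
  rwa [induced_erase_link _ _ hvB, erase_insert hv] at this

lemma CondP.trade_deletion_for_link {k m : ℕ} (hP : CondP K X d (k + 1) m) :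
    CondP K X d k (m + 1) := by
  intro B A hBA hA hB i hi
  by_cases hBm : B.card ≤ m
  · exact hP.mono k.le_succ le_rfl B A hBA hA hBm i hi
  obtain ⟨v, hvB⟩ : B.Nonempty := card_pos.1 (by omega)
  have hvB' : v ∉ B.erase v := notMem_erase v B
  have hB' : (B.erase v).card ≤ m := by rw [card_erase_of_mem hvB]; omega
  have hY := hP (B.erase v) A ((erase_subset v B).trans hBA) (by omega) hB' (i + 1) (by omega)
  have hD := hP (B.erase v) (A.erase v) (erase_subset_erase v hBA)
    (by rw [card_erase_of_mem (hBA hvB)]; omega) hB' i hi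
  rw [← induced_erase_link _ _ hvB'] at hD
  have := redHomDim_link_singleton_eq_zero hY hD
  rwa [link_link_singleton _ hvB', insert_erase hvB] at this

end CondP

/-- **Claim.** For `k ≥ 0` and `m ≥ 1`, the conditions `P(k,m)` and
`P(k+1,m-1)` are equivalent (here `m ≥ 1` is expressed by writing `m + 1`). -/
theorem condP_iff_condP_succ {V : Type} [DecidableEq V] [Fintype V]
    (K : Type) [Field K] (X : SComplex V) (d : ℕ) (k m : ℕ) :
    CondP K X d k (m + 1) ↔ CondP K X d (k + 1) m :=
  ⟨CondP.trade_link_for_deletion, CondP.trade_deletion_for_link⟩
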